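/- arXiv:0705.1751 — 3 statements merged into one kernel-verified Lean document; each statement's English description precedes it below -/
import Mathlib

section
/- Let G(x) = ∑_{i=0}^s a_i x^i be a polynomial with coefficients in F_q, q = 2^m, of binary degree d (the maximum over i with a_i ≠ 0 of the sum of binary digits of i), and let f = Tr ∘ G where Tr : F_{2^m} → F_2 is the trace. Then every value f̂(v) = ∑_{x ∈ F_q} (-1)^(Tr(G(x)) + Tr(vx)) of the Walsh transform is divisible by 2^(⌈m/d⌉). -/
/-!
Fix an `𝔽₂`-basis `b` of `𝔽_q` and write `x = ∑ c_j b_j`. Since Frobenius is additive and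
`c_j ^ 2 = c_j`, the power `x ^ 2 ^ k` is linear in the coordinates `c`, so `x ^ i` is a polynomial
of degree `σ(i)` in them, and `x ↦ Tr (G x + v x)` becomes a Boolean function of algebraic degree
at most `d`, i.e. a sum of monomials `M_t` in at most `d` coordinates each.
Expanding `(-1) ^ (∑ M_t) = ∏ (1 - 2 M_t)` and summing over `c`, a product of `k` monomials that
together involve `V` coordinates contributes `(-2) ^ k 2 ^ (m - V)`; as `V ≤ min m (d k)`, the
exponent `k + m - V` is at least `⌈m / d⌉`.
-/

open Finset

section Walsh

variable {σ ι : Type*}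

lemma ZMod.neg_one_pow_val_sum (s : Finset ι) (f : ι → ZMod 2) :
    (-1 : ℤ) ^ (∑ t ∈ s, f t).val = ∏ t ∈ s, (-1 : ℤ) ^ (f t).val := by
  have hadd : ∀ a b : ZMod 2, (-1 : ℤ) ^ (a + b).val = (-1) ^ a.val * (-1) ^ b.val := by decide
  induction s using Finset.cons_induction with
  | empty => simp
  | cons t s ht ih => rw [sum_cons, prod_cons, hadd, ih]

lemma ZMod.val_eq_ite_one (a : ZMod 2) : (a.val : ℤ) = if a = 1 then 1 else 0 := by
  revert a; decide

lemma neg_one_pow_val_sum_mul_prod (s : Finset ι) (T : ι → Finset σ) (w : ι → ZMod 2)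
    (c : σ → ZMod 2) :
    (-1 : ℤ) ^ (∑ t ∈ s, w t * ∏ j ∈ T t, c j).val =
      ∏ t ∈ s, (1 + -2 * (((w t).val : ℤ) * ∏ j ∈ T t, ((c j).val : ℤ))) := by
  have hmul : ∀ a b : ZMod 2, (-1 : ℤ) ^ (a * b).val = 1 + -2 * ((a.val : ℤ) * b.val) := by
    decide
  have hprod : ∀ S : Finset σ, ((∏ j ∈ S, c j).val : ℤ) = ∏ j ∈ S, ((c j).val : ℤ) :=
    map_prod (⟨⟨fun a : ZMod 2 => (a.val : ℤ), by decide⟩, by decide⟩ : ZMod 2 →* ℤ) c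
  rw [ZMod.neg_one_pow_val_sum]
  exact prod_congr rfl fun t _ => by rw [hmul, hprod]

variable [DecidableEq σ]

lemma prod_prod_val_eq_prod_biUnion (c : σ → ZMod 2) (U : Finset ι) (T : ι → Finset σ) :
    ∏ t ∈ U, ∏ j ∈ T t, ((c j).val : ℤ) = ∏ j ∈ U.biUnion T, ((c j).val : ℤ) := by
  have hind : ∀ S : Finset σ, ∏ j ∈ S, ((c j).val : ℤ) = if ∀ j ∈ S, c j = 1 then 1 else 0 :=
    fun S => by simp only [ZMod.val_eq_ite_one, prod_boole]
  simp only [hind, prod_boole, mem_biUnion]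
  grind

variable [Fintype σ]

lemma sum_prod_val_eq_two_pow (V : Finset σ) :
    ∑ c : σ → ZMod 2, ∏ j ∈ V, ((c j).val : ℤ) = 2 ^ (Fintype.card σ - #V) := by
  have hcoord : ∀ j, ∑ a : ZMod 2, (if j ∈ V then (a.val : ℤ) else 1) = if j ∈ V then 1 else 2 :=
    fun j => by split_ifs <;> decide
  simp_rw [← Fintype.prod_ite_mem V]
  rw [← Fintype.prod_sum (fun j (a : ZMod 2) => if j ∈ V then (a.val : ℤ) else 1)]
  simp_rw [hcoord]
  rw [prod_ite, prod_const_one, one_mul, prod_const, filter_not, card_sdiff]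
  simp

-- `(m + d - 1) / d` is `⌈m / d⌉`.
lemma add_pred_div_le_add_sub {m d k v : ℕ} (hvm : v ≤ m) (hvd : v ≤ d * k) :
    (m + d - 1) / d ≤ k + (m - v) := by
  rcases Nat.eq_zero_or_pos d with rfl | hd
  · simp
  rw [Nat.div_le_iff_le_mul_add_pred hd]
  have : m - v ≤ d * (m - v) := Nat.le_mul_of_pos_left _ hd
  rw [mul_add]
  omega

theorem two_pow_dvd_sum_neg_one_pow_of_card_le {d : ℕ} (s : Finset ι) (T : ι → Finset σ)
    (w : ι → ZMod 2) (hT : ∀ t ∈ s, #(T t) ≤ d) :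
    (2 : ℤ) ^ ((Fintype.card σ + d - 1) / d) ∣
      ∑ c : σ → ZMod 2, (-1 : ℤ) ^ (∑ t ∈ s, w t * ∏ j ∈ T t, c j).val := by
  simp_rw [neg_one_pow_val_sum_mul_prod, prod_one_add]
  rw [sum_comm]
  refine dvd_sum fun U hU => ?_
  simp_rw [prod_mul_distrib, prod_const, prod_prod_val_eq_prod_biUnion, ← mul_sum,
    sum_prod_val_eq_two_pow]
  have hcover : #(U.biUnion T) ≤ d * #U :=
    card_biUnion_le.trans <|
      (sum_le_sum fun t ht => hT t (mem_powerset.mp hU ht)).trans (by simp [mul_comm])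
  refine (pow_dvd_pow 2 (add_pred_div_le_add_sub (card_le_univ _) hcover)).trans ?_
  rw [pow_add, neg_pow, mul_assoc]
  exact (mul_dvd_mul_left _ (dvd_mul_left _ _)).mul_left _

end Walsh

theorem Nat.sum_digits_two_eq_length_bitIndices (n : ℕ) :
    (Nat.digits 2 n).sum = n.bitIndices.length := by
  induction n using Nat.binaryRec with
  | zero => simp
  | bit b n ih =>
    rcases Nat.eq_zero_or_pos (Nat.bit b n) with h | h
    · rw [h]; simp
    rw [Nat.digits_def' one_lt_two h]
    cases b
    · simp [Nat.bit, ih]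
    · simp [Nat.bit, ih, Nat.mul_add_div]
      omega

lemma Finsupp.card_support_le_sum {σ : Type*} (s : σ →₀ ℕ) :
    #s.support ≤ s.sum fun _ e => e := by
  simpa [Finsupp.sum] using s.support.card_nsmul_le_sum s 1 fun j hj =>
    Nat.one_le_iff_ne_zero.mpr (Finsupp.mem_support_iff.mp hj)

section Coordinates

variable {K σ : Type*} [CommRing K] [Fintype σ] (b : σ → K)

noncomputable def frobeniusForm (k : ℕ) : MvPolynomial σ K :=
  ∑ j, MvPolynomial.C (b j ^ 2 ^ k) * MvPolynomial.X j

noncomputable def powForm (i : ℕ) : MvPolynomial σ K :=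
  ∏ k ∈ i.bitIndices.toFinset, frobeniusForm b k

noncomputable def polyForm (H : Polynomial K) : MvPolynomial σ K :=
  H.sum fun i a => MvPolynomial.C a * powForm b i

lemma totalDegree_frobeniusForm_le (k : ℕ) : (frobeniusForm b k).totalDegree ≤ 1 :=
  MvPolynomial.totalDegree_finsetSum_le fun j _ => by
    rw [MvPolynomial.C_mul_X_eq_monomial]
    exact (MvPolynomial.totalDegree_monomial_le _ _).trans (by simp)

lemma totalDegree_powForm_le (i : ℕ) : (powForm b i).totalDegree ≤ (Nat.digits 2 i).sum := by
  rw [Nat.sum_digits_two_eq_length_bitIndices, ← List.toFinset_card_of_nodup Nat.bitIndices_nodup]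
  refine (MvPolynomial.totalDegree_finsetProd _ _).trans ?_
  simpa using sum_le_sum fun k (_ : k ∈ i.bitIndices.toFinset) => totalDegree_frobeniusForm_le b k

lemma totalDegree_polyForm_le {d : ℕ} (H : Polynomial K)
    (hH : ∀ i, H.coeff i ≠ 0 → (Nat.digits 2 i).sum ≤ d) : (polyForm b H).totalDegree ≤ d :=
  MvPolynomial.totalDegree_finsetSum_le fun i hi =>
    (MvPolynomial.totalDegree_mul _ _).trans <| by
      simpa using (totalDegree_powForm_le b i).trans (hH i (Polynomial.mem_support_iff.mp hi))

variable [Algebra (ZMod 2) K] [CharP K 2]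

lemma eval_frobeniusForm (k : ℕ) (c : σ → ZMod 2) :
    (frobeniusForm b k).eval (algebraMap (ZMod 2) K ∘ c) = (∑ j, c j • b j) ^ 2 ^ k := by
  rw [sum_pow_char_pow, frobeniusForm, map_sum]
  refine sum_congr rfl fun j _ => ?_
  rw [Algebra.smul_def, mul_pow, ← map_pow, ZMod.pow_card_pow]
  simp [mul_comm]

lemma eval_powForm (i : ℕ) (c : σ → ZMod 2) :
    (powForm b i).eval (algebraMap (ZMod 2) K ∘ c) = (∑ j, c j • b j) ^ i := by
  rw [powForm, map_prod]
  simp_rw [eval_frobeniusForm]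
  rw [prod_pow_eq_pow_sum, sum_toFinset_bitIndices_two_pow]

lemma eval_polyForm (H : Polynomial K) (c : σ → ZMod 2) :
    (polyForm b H).eval (algebraMap (ZMod 2) K ∘ c) = H.eval (∑ j, c j • b j) := by
  simp [polyForm, Polynomial.sum, eval_powForm, Polynomial.eval_eq_sum]

end Coordinates

section LinearFunctional

variable {K σ : Type*} [CommRing K] [Algebra (ZMod 2) K] (L : K →ₗ[ZMod 2] ZMod 2)

lemma linearMap_eval_algebraMap_comp (P : MvPolynomial σ K) (c : σ → ZMod 2) :
    L (P.eval (algebraMap (ZMod 2) K ∘ c)) =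
      ∑ s ∈ P.support, L (P.coeff s) * ∏ j ∈ s.support, c j := by
  rw [MvPolynomial.eval_eq, map_sum]
  refine sum_congr rfl fun s _ => ?_
  have hpow : ∀ j ∈ s.support, (algebraMap (ZMod 2) K ∘ c) j ^ s j = algebraMap (ZMod 2) K (c j) :=
    fun j hj => by
      rw [Function.comp_apply, ← map_pow,
        IsIdempotentElem.pow_eq ((show ∀ a : ZMod 2, a * a = a by decide) (c j))
          (Finsupp.mem_support_iff.mp hj)]
  rw [prod_congr rfl hpow, ← map_prod, mul_comm, ← Algebra.smul_def, map_smul, smul_eq_mul,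
    mul_comm]

theorem two_pow_dvd_sum_neg_one_pow_linearMap_eval [Fintype σ] [DecidableEq σ] {d : ℕ}
    (P : MvPolynomial σ K) (hP : P.totalDegree ≤ d) :
    (2 : ℤ) ^ ((Fintype.card σ + d - 1) / d) ∣
      ∑ c : σ → ZMod 2, (-1 : ℤ) ^ (L (P.eval (algebraMap (ZMod 2) K ∘ c))).val := by
  simp_rw [linearMap_eval_algebraMap_comp]
  exact two_pow_dvd_sum_neg_one_pow_of_card_le _ _ _ fun s hs =>
    s.card_support_le_sum.trans <| (MvPolynomial.le_totalDegree hs).trans hP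

end LinearFunctional

open Polynomial

theorem stmt7_general (m d : ℕ) (hm : 0 < m) (hd : 0 < d) [Fintype (GaloisField 2 m)]
    (G : Polynomial (GaloisField 2 m))
    (hdeg : ∀ i, G.coeff i ≠ 0 → ((Nat.digits 2 i).sum ≤ d))
    (v : GaloisField 2 m) :
    (2 : ℤ) ^ ((m + d - 1) / d) ∣
      ∑ x : GaloisField 2 m,
        (-1 : ℤ) ^ (Algebra.trace (ZMod 2) (GaloisField 2 m) (G.eval x) +
          Algebra.trace (ZMod 2) (GaloisField 2 m) (v * x)).val := by
  set H := G + C v * X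
  have hH : ∀ i, H.coeff i ≠ 0 → (Nat.digits 2 i).sum ≤ d := by
    intro i hi
    rcases eq_or_ne i 1 with rfl | h1
    · simpa using Nat.succ_le_of_lt hd
    · exact hdeg i (by simpa [H, coeff_X, h1.symm] using hi)
  let B := Module.finBasisOfFinrankEq (ZMod 2) (GaloisField 2 m) (GaloisField.finrank 2 hm.ne')
  have key := two_pow_dvd_sum_neg_one_pow_linearMap_eval (Algebra.trace (ZMod 2) _)
    (polyForm B H) (totalDegree_polyForm_le B H hH)
  rw [Fintype.card_fin] at key
  convert key using 1
  rw [← B.equivFun.symm.toEquiv.sum_comp]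
  refine sum_congr rfl fun c _ => ?_
  have hx : B.equivFun.symm.toEquiv c = ∑ j, c j • B j := B.equivFun_symm_apply c
  rw [eval_polyForm, ← map_add, hx]
  simp only [H, eval_add, eval_mul, eval_C, eval_X]

/-- Moreno–Moreno divisibility: every Walsh coefficient of `Tr ∘ G` is divisible by
`2^⌈m/d⌉` where `d` is the binary degree of `G` (the maximum binary weight of an
exponent with nonzero coefficient). -/
theorem stmt7 (m d : ℕ) (hm : 0 < m) (hd : 0 < d) [Fintype (GaloisField 2 m)]
    (G : Polynomial (GaloisField 2 m))
    (hdeg : ∀ i, G.coeff i ≠ 0 → ((Nat.digits 2 i).sum ≤ d))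
    (hdeg' : ∃ i, G.coeff i ≠ 0 ∧ (Nat.digits 2 i).sum = d)
    (v : GaloisField 2 m) :
    (2 : ℤ) ^ ((m + d - 1) / d) ∣
      ∑ x : GaloisField 2 m,
        (-1 : ℤ) ^ (Algebra.trace (ZMod 2) (GaloisField 2 m) (G.eval x) +
          Algebra.trace (ZMod 2) (GaloisField 2 m) (v * x)).val :=
  stmt7_general m d hm hd G hdeg v
end

section
/- Let q = 2^m with m odd, G a polynomial over F_q of binary degree 2 (e.g. G(x) = ∑_i b_i x^(2^i+1) + linear and constant terms), and f = Tr ∘ G. Then ‖f̂‖_∞ ≥ √(2q). In particular, every nonzero value of the Walsh transform of f has absolute value at least 2^((m+1)/2). -/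
open Finset Polynomial

section helpers

lemma digitsum_zero (n : ℕ) (h : (Nat.digits 2 n).sum = 0) : n = 0 := by
  induction n using Nat.strong_induction_on with
  | _ n ih =>
    rcases Nat.eq_zero_or_pos n with h0 | h0
    · exact h0
    · rw [Nat.digits_def' (by norm_num) h0, List.sum_cons] at h
      have h1 : n % 2 = 0 := by omega
      have h2 : n / 2 = 0 := ih (n / 2) (Nat.div_lt_self h0 (by norm_num)) (by omega)
      omega

lemma digitsum_one (n : ℕ) (h : (Nat.digits 2 n).sum ≤ 1) : n = 0 ∨ ∃ i, n = 2 ^ i := by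
  induction n using Nat.strong_induction_on with
  | _ n ih =>
    rcases Nat.eq_zero_or_pos n with h0 | h0
    · exact Or.inl h0
    rw [Nat.digits_def' (by norm_num) h0, List.sum_cons] at h
    rcases Nat.mod_two_eq_zero_or_one n with hr | hr
    · rcases ih (n / 2) (Nat.div_lt_self h0 (by norm_num)) (by omega) with h2 | ⟨i, hi⟩
      · omega
      · right; exact ⟨i + 1, by omega⟩
    · have h2 : n / 2 = 0 := digitsum_zero _ (by omega)
      right; exact ⟨0, by omega⟩

lemma digitsum_two (n : ℕ) (h : (Nat.digits 2 n).sum ≤ 2) :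
    n = 0 ∨ (∃ i, n = 2 ^ i) ∨ ∃ i j, i < j ∧ n = 2 ^ i + 2 ^ j := by
  induction n using Nat.strong_induction_on with
  | _ n ih =>
    rcases Nat.eq_zero_or_pos n with h0 | h0
    · exact Or.inl h0
    rw [Nat.digits_def' (by norm_num) h0, List.sum_cons] at h
    rcases Nat.mod_two_eq_zero_or_one n with hr | hr
    · rcases ih (n / 2) (Nat.div_lt_self h0 (by norm_num)) (by omega) with h2 | ⟨i, hi⟩ | ⟨i, j, hij, hij'⟩
      · omega
      · exact Or.inr (Or.inl ⟨i + 1, by omega⟩)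
      · refine Or.inr (Or.inr ⟨i + 1, j + 1, by omega, ?_⟩)
        have : 2 ^ (i+1) = 2 * 2 ^ i := by ring
        have : 2 ^ (j+1) = 2 * 2 ^ j := by ring
        omega
    · rcases digitsum_one (n / 2) (by omega) with h2 | ⟨i, hi⟩
      · exact Or.inr (Or.inl ⟨0, by omega⟩)
      · refine Or.inr (Or.inr ⟨0, i + 1, by omega, ?_⟩)
        have : 2 ^ (i+1) = 2 * 2 ^ i := by ring
        omega

variable {F : Type*} [Field F] [CharP F 2]

lemma phi_id (n : ℕ) (hn : n = 0 ∨ (∃ i, n = 2 ^ i) ∨ ∃ i j, i < j ∧ n = 2 ^ i + 2 ^ j)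
    (x a b : F) :
    (x + a + b) ^ n + (x + a) ^ n + (x + b) ^ n + x ^ n
      = (a + b) ^ n + a ^ n + b ^ n + (0 : F) ^ n := by
  have h2 : (2 : F) = 0 := by exact_mod_cast CharP.cast_eq_zero F 2
  have frob : ∀ (i : ℕ) (u v : F), (u + v) ^ (2 ^ i) = u ^ (2 ^ i) + v ^ (2 ^ i) := by
    intro i u v; haveI : Fact (Nat.Prime 2) := ⟨by norm_num⟩; exact add_pow_char_pow u v 2 i
  rcases hn with rfl | ⟨i, rfl⟩ | ⟨i, j, hij, rfl⟩
  · simp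
  · rw [show x + a + b = (x + a) + b from rfl, frob, frob, frob, frob,
      zero_pow (by positivity)]
    linear_combination (2 * x ^ (2 ^ i)) * h2
  · simp only [pow_add]
    rw [show x + a + b = (x + a) + b from rfl]
    rw [frob, frob, frob, frob, frob, frob, frob, frob]
    linear_combination (2 * x ^ 2^i * x ^ 2^j + x ^ 2^i * a ^ 2^j + x ^ 2^i * b ^ 2^j
      + a ^ 2^i * x ^ 2^j + b ^ 2^i * x ^ 2^j) * h2

lemma eval_sd (G : Polynomial F) (hdeg : ∀ i, G.coeff i ≠ 0 → ((Nat.digits 2 i).sum ≤ 2))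
    (x a b : F) :
    G.eval (x + a + b) + G.eval (x + a) + G.eval (x + b) + G.eval x
      = G.eval (a + b) + G.eval a + G.eval b + G.eval 0 := by
  have key : ∀ y : F, G.eval y = ∑ i ∈ Finset.range (G.natDegree + 1), G.coeff i * y ^ i :=
    fun y => G.eval_eq_sum_range y
  simp only [key, ← Finset.sum_add_distrib]
  refine Finset.sum_congr rfl fun i _ => ?_
  by_cases hc : G.coeff i = 0
  · simp [hc]
  · have h := phi_id i (digitsum_two i (hdeg i hc)) x a b
    linear_combination (G.coeff i) * h

lemma e_add (s t : ZMod 2) : ((-1:ℤ))^((s+t).val) = (-1:ℤ)^s.val * (-1:ℤ)^t.val := by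
  revert s t; decide

lemma sum_e_eq_zero {A : Type*} [AddCommGroup A] [Fintype A] (h : A → ZMod 2)
    (hadd : ∀ x y, h (x + y) = h x + h y) (hne : ∃ x, h x ≠ 0) :
    ∑ x : A, ((-1:ℤ))^(h x).val = 0 := by
  obtain ⟨x0, hx0⟩ := hne
  have h1 : h x0 = 1 := by
    have : ∀ t : ZMod 2, t ≠ 0 → t = 1 := by decide
    exact this _ hx0
  have key : ∑ x : A, ((-1:ℤ))^(h x).val = ∑ x : A, ((-1:ℤ))^(h (x + x0)).val :=
    (Fintype.sum_equiv (Equiv.addRight x0) _ _ (fun x => rfl)).symm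
  have e1 : ∀ t : ZMod 2, ((-1:ℤ))^((t+1 : ZMod 2)).val = -((-1:ℤ)^t.val) := by decide
  simp only [hadd, h1, e1] at key
  rw [Finset.sum_neg_distrib] at key
  linarith

lemma sum_e_cases {A : Type*} [AddCommGroup A] [Fintype A] (h : A → ZMod 2)
    (hadd : ∀ x y, h (x + y) = h x + h y) :
    ∑ x : A, ((-1:ℤ))^(h x).val = Fintype.card A ∨ ∑ x : A, ((-1:ℤ))^(h x).val = 0 := by
  by_cases hz : ∀ x, h x = 0
  · left; simp [hz]
  · right; exact sum_e_eq_zero h hadd (not_forall.mp hz)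

lemma abs_ge_of_sq_dvd (m : ℕ) (hm : Odd m) (w : ℤ) (hw : w ≠ 0)
    (h : (2:ℤ)^m ∣ w^2) : (2:ℤ) ^ ((m + 1) / 2) ≤ |w| := by
  set n := w.natAbs with hn
  have hn0 : n ≠ 0 := Int.natAbs_ne_zero.mpr hw
  have hdvd : 2^m ∣ n^2 := by
    have : ((2:ℤ)^m).natAbs ∣ (w^2).natAbs := Int.natAbs_dvd_natAbs.mpr h
    simpa [Int.natAbs_pow] using this
  have hp : Nat.Prime 2 := by norm_num
  have hfac : m ≤ (n^2).factorization 2 :=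
    (Nat.Prime.pow_dvd_iff_le_factorization hp (pow_ne_zero 2 hn0)).mp hdvd
  rw [Nat.factorization_pow] at hfac
  have hfac2 : m ≤ 2 * n.factorization 2 := by simpa using hfac
  have hm1 : m + 1 ≤ 2 * n.factorization 2 := by
    rcases hm with ⟨k, rfl⟩; omega
  have hdvd2 : 2^(m+1) ∣ n^2 := by
    refine (Nat.Prime.pow_dvd_iff_le_factorization hp (pow_ne_zero 2 hn0)).mpr ?_
    rw [Nat.factorization_pow]; simpa using hm1
  have hle : (2:ℕ)^(m+1) ≤ n^2 := Nat.le_of_dvd (by positivity) hdvd2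
  have heq : (m+1)/2 * 2 = m + 1 := by rcases hm with ⟨k, rfl⟩; omega
  have hn2 : (2:ℕ)^((m+1)/2) ≤ n := by
    have h1 : ((2:ℕ)^((m+1)/2))^2 ≤ n^2 := by
      rw [← pow_mul, heq]; exact hle
    exact Nat.pow_le_pow_iff_left (n := 2) (by omega) |>.mp h1
  have : ((2:ℕ)^((m+1)/2) : ℤ) ≤ (n : ℤ) := by exact_mod_cast hn2
  calc (2:ℤ) ^ ((m+1)/2) = ((2:ℕ)^((m+1)/2) : ℤ) := by push_cast; ring
    _ ≤ (n : ℤ) := this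
    _ = |w| := (Int.abs_eq_natAbs w).symm

end helpers

/-- Walsh transform of `Tr ∘ G` on `F_{2^m}`. -/
noncomputable def walshF (m : ℕ) [Fintype (GaloisField 2 m)]
    (f : GaloisField 2 m → ZMod 2) (v : GaloisField 2 m) : ℤ :=
  ∑ x : GaloisField 2 m,
    (-1 : ℤ) ^ (f x + Algebra.trace (ZMod 2) (GaloisField 2 m) (v * x)).val

section main

variable (m : ℕ) [Fintype (GaloisField 2 m)]

local notation "K" => GaloisField 2 m
local notation "Tr" => Algebra.trace (ZMod 2) (GaloisField 2 m)

lemma walsh_sq_dvd (hm0 : 0 < m) (f : K → ZMod 2)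
    (fsd : ∀ x a b : K, f (x + a + b) + f (x + a) + f (x + b) + f x
      = f (a + b) + f a + f b + f 0) (v : K) :
    ((2:ℤ)^m) ∣ (walshF m f v)^2 := by
  have hcard : Fintype.card K = 2 ^ m := by
    rw [← Nat.card_eq_fintype_card]; exact GaloisField.card 2 m hm0.ne'
  have haddself : ∀ x : K, x + x = 0 := fun x => CharTwo.add_self_eq_zero x
  have h2z : (2 : ZMod 2) = 0 := by decide
  have step : (walshF m f v)^2
      = ∑ a : K, ∑ x : K, (-1:ℤ)^(Tr (v * a)).val * (-1:ℤ)^(f (x + a) + f x).val := by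
    calc (walshF m f v)^2
        = ∑ x : K, ∑ y : K,
            (-1:ℤ)^(f x + Tr (v*x)).val * (-1:ℤ)^(f y + Tr (v*y)).val := by
          rw [walshF, sq, Finset.sum_mul_sum]
      _ = ∑ x : K, ∑ a : K, (-1:ℤ)^(Tr (v*a)).val * (-1:ℤ)^(f (x+a) + f x).val := by
          refine Finset.sum_congr rfl fun x _ => ?_
          have hre := Fintype.sum_equiv (Equiv.addLeft x)
            (fun a => (-1:ℤ)^(f x + Tr (v*x)).val * (-1:ℤ)^(f (x+a) + Tr (v*(x+a))).val)
            (fun y => (-1:ℤ)^(f x + Tr (v*x)).val * (-1:ℤ)^(f y + Tr (v*y)).val)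
            (fun a => rfl)
          rw [← hre]
          refine Finset.sum_congr rfl fun a _ => ?_
          beta_reduce
          rw [← e_add, ← e_add]
          have htr : Tr (v*x) + Tr (v*(x+a)) = Tr (v*a) := by
            rw [← map_add]
            congr 1
            rw [mul_add, ← add_assoc, haddself, zero_add]
          have harg : f x + Tr (v*x) + (f (x+a) + Tr (v*(x+a)))
              = Tr (v*a) + (f (x+a) + f x) := by
            linear_combination htr
          rw [harg]
      _ = ∑ a : K, ∑ x : K, (-1:ℤ)^(Tr (v*a)).val * (-1:ℤ)^(f (x+a) + f x).val :=
          Finset.sum_comm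
  rw [step]
  refine Finset.dvd_sum fun a _ => ?_
  rw [← Finset.mul_sum]
  set h : K → ZMod 2 := fun x => f (x + a) + f x + (f a + f 0) with hh
  have hadd : ∀ x y, h (x + y) = h x + h y := by
    intro x y
    have E := fsd x y a
    simp only [hh]
    linear_combination E - (f (x + a) + f x) * h2z
  have hsplit : ∑ x : K, (-1:ℤ)^(f (x+a) + f x).val
      = (-1:ℤ)^(f a + f 0).val * ∑ x : K, (-1:ℤ)^(h x).val := by
    rw [Finset.mul_sum]
    refine Finset.sum_congr rfl fun x _ => ?_
    rw [← e_add]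
    have : f (x + a) + f x = f a + f 0 + h x := by
      simp only [hh]; linear_combination -(f a + f 0) * h2z
    rw [this]
  rw [hsplit]
  rcases sum_e_cases h hadd with hc | hc
  · rw [hc, hcard]
    push_cast
    exact ⟨(-1:ℤ)^((Tr (v*a)).val) * (-1:ℤ)^((f a + f 0)).val, by ring⟩
  · rw [hc]
    simp

lemma walsh_exists_ne (hm0 : 0 < m) (f : K → ZMod 2) : ∃ v, walshF m f v ≠ 0 := by
  by_contra hall
  push_neg at hall
  have hsum : ∑ v : K, walshF m f v = 0 := by simp [hall]
  have hcard : Fintype.card K = 2 ^ m := by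
    rw [← Nat.card_eq_fintype_card]; exact GaloisField.card 2 m hm0.ne'
  have hTrne : ∃ z : K, Tr z ≠ 0 := by
    have h := Algebra.trace_ne_zero (ZMod 2) K
    exact DFunLike.ne_iff.mp h
  have key : ∑ v : K, walshF m f v = (-1:ℤ)^(f 0).val * 2^m := by
    calc ∑ v : K, walshF m f v = ∑ x : K, ∑ v : K, (-1:ℤ)^(f x + Tr (v*x)).val := by
          simp only [walshF]; exact Finset.sum_comm
      _ = ∑ x : K, (-1:ℤ)^(f x).val * ∑ v : K, (-1:ℤ)^(Tr (v*x)).val := by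
          refine Finset.sum_congr rfl fun x _ => ?_
          rw [Finset.mul_sum]
          exact Finset.sum_congr rfl fun v _ => e_add _ _
      _ = (-1:ℤ)^(f 0).val * 2^m := by
          rw [Finset.sum_eq_single 0]
          · simp [hcard]
          · intro x _ hx
            have : ∑ v : K, (-1:ℤ)^(Tr (v*x)).val = 0 := by
              refine sum_e_eq_zero (fun v => Tr (v*x))
                (fun v w => by show Tr ((v+w)*x) = Tr (v*x) + Tr (w*x); rw [add_mul, map_add]) ?_
              obtain ⟨z, hz⟩ := hTrne
              refine ⟨z * x⁻¹, ?_⟩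
              show Tr (z * x⁻¹ * x) ≠ 0
              rwa [mul_assoc, inv_mul_cancel₀ hx, mul_one]
            rw [this, mul_zero]
          · intro h; exact absurd (Finset.mem_univ 0) h
  rw [hsum] at key
  have : ((-1:ℤ)^(f 0).val * 2^m) ≠ 0 := by positivity
  exact this key.symm

end main

theorem stmt8 (m : ℕ) (hm : Odd m) (hm0 : 0 < m) [Fintype (GaloisField 2 m)]
    (G : Polynomial (GaloisField 2 m))
    (hdeg : ∀ i, G.coeff i ≠ 0 → ((Nat.digits 2 i).sum ≤ 2))
    (hdeg' : ∃ i, G.coeff i ≠ 0 ∧ (Nat.digits 2 i).sum = 2)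
    (f : GaloisField 2 m → ZMod 2)
    (hf : ∀ x, f x = Algebra.trace (ZMod 2) (GaloisField 2 m) (G.eval x)) :
    Real.sqrt (2 * 2 ^ m) ≤
      ((Finset.univ.sup' Finset.univ_nonempty fun v => |walshF m f v|) : ℤ) ∧
    ∀ v, walshF m f v ≠ 0 → (2 : ℤ) ^ ((m + 1) / 2) ≤ |walshF m f v| := by
  have fsd : ∀ x a b : GaloisField 2 m,
      f (x + a + b) + f (x + a) + f (x + b) + f x = f (a + b) + f a + f b + f 0 := by
    intro x a b
    simp only [hf, ← map_add]
    exact congrArg _ (eval_sd G hdeg x a b)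
  have part2 : ∀ v, walshF m f v ≠ 0 → (2 : ℤ) ^ ((m + 1) / 2) ≤ |walshF m f v| :=
    fun v hv => abs_ge_of_sq_dvd m hm _ hv (walsh_sq_dvd m hm0 f fsd v)
  refine ⟨?_, part2⟩
  obtain ⟨v0, hv0⟩ := walsh_exists_ne m hm0 f
  have h1 := part2 v0 hv0
  have h2 : |walshF m f v0| ≤ Finset.univ.sup' Finset.univ_nonempty fun v => |walshF m f v| :=
    Finset.le_sup' (fun v => |walshF m f v|) (Finset.mem_univ v0)
  have hZ : (2:ℤ)^((m+1)/2) ≤ Finset.univ.sup' Finset.univ_nonempty fun v => |walshF m f v| :=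
    le_trans h1 h2
  have heq : (m+1)/2 * 2 = m + 1 := by rcases hm with ⟨k, rfl⟩; omega
  have hsq : ((2:ℝ)^((m+1)/2))^2 = 2 * 2^m := by
    rw [← pow_mul, heq, pow_succ]; ring
  have hsqrt : Real.sqrt (2 * 2^m) = (2:ℝ)^((m+1)/2) := by
    rw [← hsq, Real.sqrt_sq (by positivity)]
  rw [hsqrt]
  exact_mod_cast hZ
end

section
/- Let k = F_q with q = 2^m, and C_1 the affine curve y^2 + y = a x^5 + b x^3 + c x + d over k with a ≠ 0 (counting also the point at infinity). Let R(x) = a x^4 + b x^2 + c^2 x, Q(x) = Tr(x R(x)), W the radical of the symplectic form <x,y>_R = Tr(xR(y) + yR(x)) on k, and V = {x ∈ W : Q(x) = 0}. Then: if V ≠ W, the number of points of C_1 over k equals 1 + q; if V = W, then #C_1(k) = 1 + q ± √(2^w q) where w = dim_{F_2} W. -/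
open Finset
open scoped Classical

/-!
Since squaring is additive in characteristic 2, `R` is additive, so `Q x = Tr (x R(x))` is a
quadratic form over `𝔽₂` with polar form `B x y = Tr (x R(y) + y R(x))`, whose radical is `W`.
The equation `y² + y = t` has `1 + (-1)^Tr(t)` solutions (additive Hilbert 90), and
`Tr (a x⁵ + b x³ + c x + d) = Q x + Tr d` because `c x + c² x²` is of the form `z² + z`. Hence
`#C₁ = 1 + q ± S` with `S = ∑ₓ (-1)^Q(x)`. Substituting `y = h + x` in `S²` turns it into
`q ∑_{h ∈ W} (-1)^Q(h)`; as `Q` is additive on `W`, this is `q · #W` if `Q` vanishes on `W`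
and `0` otherwise.
-/

def signChar : AddChar (ZMod 2) ℤ where
  toFun t := if t = 0 then 1 else -1
  map_zero_eq_one' := rfl
  map_add_eq_mul' := by decide

lemma signChar_eq_one_iff {t : ZMod 2} : signChar t = 1 ↔ t = 0 := by
  revert t; decide

lemma signChar_apply (t : ZMod 2) : signChar t = if t = 0 then 1 else -1 := rfl

lemma signChar_sq (t : ZMod 2) : signChar t ^ 2 = 1 := by
  revert t; decide

section CharacterSums

variable {G : Type*} [AddCommGroup G] [Fintype G]

theorem sum_signChar_eq_ite (L : G →+ ZMod 2) :
    ∑ x, signChar (L x) = if L = 0 then (Fintype.card G : ℤ) else 0 := by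
  have hL : signChar.compAddMonoidHom L = 0 ↔ L = 0 := by
    rw [AddChar.eq_zero_iff, DFunLike.ext_iff]
    simp only [AddChar.compAddMonoidHom_apply, signChar_eq_one_iff, AddMonoidHom.zero_apply]
  simp only [← hL]
  exact AddChar.sum_eq_ite (signChar.compAddMonoidHom L)

variable (Q : G → ZMod 2) (B : G →+ G →+ ZMod 2)

theorem sq_sum_signChar_eq (hQ : ∀ x y, Q (x + y) = Q x + Q y + B x y) :
    (∑ x, signChar (Q x)) ^ 2 = Fintype.card G * ∑ h : B.ker, signChar (Q h) := by
  have hshift : ∀ h x,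
      signChar (Q x) * signChar (Q (h + x)) = signChar (Q h) * signChar (B h x) := by
    intro h x
    have hcancel : ∀ a b c : ZMod 2, a + (b + a + c) = b + c := by decide
    rw [← AddChar.map_add_eq_mul, ← AddChar.map_add_eq_mul, hQ, hcancel]
  calc (∑ x, signChar (Q x)) ^ 2
      = ∑ x, ∑ h, signChar (Q x) * signChar (Q (h + x)) := by
        rw [sq, sum_mul_sum]
        exact sum_congr rfl fun x _ => (Fintype.sum_equiv (Equiv.addRight x) _ _ fun _ => rfl).symm
    _ = ∑ h, signChar (Q h) * ∑ x, signChar (B h x) := by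
        rw [sum_comm]; simp only [hshift, mul_sum]
    _ = ∑ h, if h ∈ B.ker then Fintype.card G * signChar (Q h) else 0 := by
        refine sum_congr rfl fun h _ => ?_
        rw [sum_signChar_eq_ite]
        by_cases hh : B h = 0 <;> simp [hh, mul_comm]
    _ = Fintype.card G * ∑ h : B.ker, signChar (Q h) := by
        rw [← sum_filter, ← mul_sum, sum_subtype (p := (· ∈ B.ker)) _ (by simp)]

theorem sum_ker_signChar_eq_ite (hQ : ∀ x y, Q (x + y) = Q x + Q y + B x y) :
    ∑ h : B.ker, signChar (Q h) =
      if ∀ h ∈ B.ker, Q h = 0 then (Fintype.card B.ker : ℤ) else 0 := by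
  let QB : B.ker →+ ZMod 2 := AddMonoidHom.mk' (fun h => Q h) fun g h => by
    simp [hQ, (AddMonoidHom.mem_ker).1 g.2]
  have hQB : QB = 0 ↔ ∀ h ∈ B.ker, Q h = 0 := by
    simp [DFunLike.ext_iff, QB]
  simp only [← hQB]
  exact sum_signChar_eq_ite QB

end CharacterSums

section CharTwoField

variable {K : Type*} [Field K] [Algebra (ZMod 2) K]

local notation "Tr" => Algebra.trace (ZMod 2) K

theorem charP_two_of_algebra : CharP K 2 :=
  charP_of_injective_algebraMap (algebraMap (ZMod 2) K).injective 2

variable (K) in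
def artinSchreier : K →+ K :=
  AddMonoidHom.mk' (fun y => y ^ 2 + y) fun x y => by
    have := charP_two_of_algebra (K := K)
    rw [add_pow_char]; ring

theorem artinSchreier_apply (y : K) : artinSchreier K y = y ^ 2 + y := rfl

theorem sq_add_self_eq_zero_iff {z : K} : z ^ 2 + z = 0 ↔ z = 0 ∨ z = 1 := by
  have := charP_two_of_algebra (K := K)
  rw [show z ^ 2 + z = z * (z + 1) by ring, mul_eq_zero, add_eq_zero_iff_eq_neg, CharTwo.neg_eq]

theorem card_ker_artinSchreier : Nat.card (artinSchreier K).ker = 2 := by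
  have := charP_two_of_algebra (K := K)
  have hker : ((artinSchreier K).ker : Set K) = {0, 1} := by
    ext z
    simp [artinSchreier_apply, sq_add_self_eq_zero_iff]
  rw [← SetLike.coe_sort_coe, hker, Nat.card_coe_set_eq, Set.ncard_pair zero_ne_one]

noncomputable def tracePolar (R : K →+ K) : K →+ K →+ ZMod 2 :=
  let T := (AddMonoidHom.mul.compl₂ R).compr₂ (Tr).toAddMonoidHom
  T + T.flip

theorem tracePolar_apply (R : K →+ K) (x y : K) :
    tracePolar R x y = Tr (x * R y + y * R x) := by
  simp [tracePolar]

theorem trace_mul_map_add (R : K →+ K) (x y : K) :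
    Tr ((x + y) * R (x + y)) = Tr (x * R x) + Tr (y * R y) + tracePolar R x y := by
  rw [tracePolar_apply, map_add, add_mul, mul_add, mul_add, map_add, map_add, map_add, map_add]
  ring

theorem add_pow_four_add_sq_add (a b c x y : K) :
    a * (x + y) ^ 4 + b * (x + y) ^ 2 + c * (x + y) =
      (a * x ^ 4 + b * x ^ 2 + c * x) + (a * y ^ 4 + b * y ^ 2 + c * y) := by
  have := charP_two_of_algebra (K := K)
  have h4 : ∀ z : K, z ^ 4 = (z ^ 2) ^ 2 := fun z => by ring
  rw [h4, h4, h4, add_pow_char, add_pow_char]; ring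

variable [Fintype K]

theorem trace_sq (y : K) : Tr (y ^ 2) = Tr y := by
  simpa [ZMod.card] using
    Algebra.trace_eq_of_algEquiv (FiniteField.frobeniusAlgEquivOfAlgebraic (ZMod 2) K) y

theorem trace_sq_add_self (y : K) : Tr (y ^ 2 + y) = 0 := by
  rw [map_add, trace_sq, CharTwo.add_self_eq_zero]

theorem range_artinSchreier : (artinSchreier K).range = (Tr).toAddMonoidHom.ker := by
  have hle : (artinSchreier K).range ≤ (Tr).toAddMonoidHom.ker := by
    rintro _ ⟨y, rfl⟩
    exact trace_sq_add_self y
  -- additive Hilbert 90 by counting: both subgroups have index 2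
  have hTr : Nat.card (Tr).toAddMonoidHom.ker * 2 = Nat.card K := by
    have hrange : (Tr).toAddMonoidHom.range = ⊤ :=
      AddMonoidHom.range_eq_top.2 (Algebra.trace_surjective (ZMod 2) K)
    rw [← AddSubgroup.card_mul_index (Tr).toAddMonoidHom.ker, AddSubgroup.index_ker, hrange,
      AddSubgroup.card_top (G := ZMod 2), Nat.card_zmod]
  have hAS : Nat.card (artinSchreier K).range * 2 = Nat.card K := by
    rw [← AddSubgroup.card_mul_index (artinSchreier K).ker, AddSubgroup.index_ker,
      card_ker_artinSchreier, mul_comm]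
  exact AddSubgroup.eq_of_le_of_card_ge hle (by omega)

theorem card_filter_sq_add_self_eq (t : K) :
    (#{y | y ^ 2 + y = t} : ℤ) = 1 + signChar (Tr t) := by
  by_cases ht : Tr t = 0
  · obtain ⟨y₀, rfl⟩ : t ∈ (artinSchreier K).range := by
      rw [range_artinSchreier]; exact ht
    have hfiber : ({y | y ^ 2 + y = artinSchreier K y₀} : Finset K) = {y₀, y₀ + 1} := by
      ext y
      rw [mem_filter, ← artinSchreier_apply, ← sub_eq_zero, ← map_sub, artinSchreier_apply,
        sq_add_self_eq_zero_iff, sub_eq_zero, sub_eq_iff_eq_add']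
      simp
    have hne : y₀ ≠ y₀ + 1 := by simp
    rw [hfiber, card_pair hne, signChar_apply, if_pos ht]
    rfl
  · have hempty : ({y | y ^ 2 + y = t} : Finset K) = ∅ :=
      filter_eq_empty_iff.2 fun y _ hy => ht (hy ▸ trace_sq_add_self y)
    rw [hempty, signChar_apply, if_neg ht]
    rfl

theorem card_artinSchreier_curve (f : K → K) :
    (#{p : K × K | p.2 ^ 2 + p.2 = f p.1} : ℤ) = Fintype.card K + ∑ x, signChar (Tr (f x)) := by
  rw [card_filter, Fintype.sum_prod_type]
  push_cast
  simp only [sum_boole, card_filter_sq_add_self_eq, sum_add_distrib, sum_const, card_univ,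
    nsmul_eq_mul, mul_one]

theorem card_quintic_curve (a b c d : K) :
    (#{p : K × K | p.2 ^ 2 + p.2 = a * p.1 ^ 5 + b * p.1 ^ 3 + c * p.1 + d} : ℤ) =
      Fintype.card K +
        signChar (Tr d) * ∑ x, signChar (Tr (x * (a * x ^ 4 + b * x ^ 2 + c ^ 2 * x))) := by
  have := charP_two_of_algebra (K := K)
  have hsplit : ∀ x : K, a * x ^ 5 + b * x ^ 3 + c * x + d =
      x * (a * x ^ 4 + b * x ^ 2 + c ^ 2 * x) + ((c * x) ^ 2 + c * x) + d := fun x => by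
    linear_combination (-(c ^ 2 * x ^ 2)) * CharTwo.two_eq_zero (R := K)
  rw [card_artinSchreier_curve (fun x => a * x ^ 5 + b * x ^ 3 + c * x + d), mul_sum]
  refine congrArg _ (sum_congr rfl fun x _ => ?_)
  rw [hsplit, map_add Tr, map_add Tr, trace_sq_add_self, add_zero, AddChar.map_add_eq_mul,
    mul_comm]

end CharTwoField

theorem add_eq_add_sqrt_or_sub_sqrt {e y : ℝ} (x : ℝ) (he : e ^ 2 = y) :
    x + e = x + √y ∨ x + e = x - √y := by
  rw [← he, Real.sqrt_sq_eq_abs]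
  rcases abs_choice e with h | h
  · left; rw [h]
  · right; rw [h, sub_neg_eq_add]

theorem stmt9_general (m : ℕ) (hm : 0 < m) [Fintype (GaloisField 2 m)]
    (a b c d : GaloisField 2 m)
    (R : GaloisField 2 m → GaloisField 2 m)
    (hR : ∀ x, R x = a * x ^ 4 + b * x ^ 2 + c ^ 2 * x)
    (Q : GaloisField 2 m → ZMod 2)
    (hQ : ∀ x, Q x = Algebra.trace (ZMod 2) (GaloisField 2 m) (x * R x))
    (W : Submodule (ZMod 2) (GaloisField 2 m))
    (hW : ∀ x, x ∈ W ↔ ∀ y,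
      Algebra.trace (ZMod 2) (GaloisField 2 m) (x * R y + y * R x) = 0)
    (w : ℕ) (hw : w = Module.finrank (ZMod 2) W)
    (N : ℕ)
    (hN : N = 1 + (Finset.univ.filter
      (fun p : GaloisField 2 m × GaloisField 2 m =>
        p.2 ^ 2 + p.2 = a * p.1 ^ 5 + b * p.1 ^ 3 + c * p.1 + d)).card) :
    ((∃ x ∈ W, Q x ≠ 0) → (N : ℝ) = 1 + 2 ^ m) ∧
    ((∀ x ∈ W, Q x = 0) →
      (N : ℝ) = 1 + 2 ^ m + Real.sqrt (2 ^ w * 2 ^ m) ∨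
      (N : ℝ) = 1 + 2 ^ m - Real.sqrt (2 ^ w * 2 ^ m)) := by
  have hq : Fintype.card (GaloisField 2 m) = 2 ^ m := by
    rw [← Nat.card_eq_fintype_card]; exact GaloisField.card 2 m hm.ne'
  have hRadd : ∀ x y, R (x + y) = R x + R y := fun x y => by
    simp only [hR]; exact add_pow_four_add_sq_add a b (c ^ 2) x y
  set B := tracePolar (AddMonoidHom.mk' R hRadd)
  have hQB : ∀ x y, Q (x + y) = Q x + Q y + B x y := fun x y => by
    rw [hQ, hQ, hQ]; exact trace_mul_map_add (AddMonoidHom.mk' R hRadd) x y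
  have hWB : ∀ x, x ∈ W ↔ x ∈ B.ker := fun x => by
    simp [hW, DFunLike.ext_iff, B, tracePolar_apply]
  have hS := sq_sum_signChar_eq Q B hQB
  rw [sum_ker_signChar_eq_ite Q B hQB] at hS
  have hNS : (N : ℤ) =
      1 + 2 ^ m + signChar (Algebra.trace (ZMod 2) _ d) * ∑ x, signChar (Q x) := by
    rw [hN, Nat.cast_add, card_quintic_curve, hq]
    simp only [← hR, ← hQ]
    push_cast; ring
  constructor
  · rintro ⟨x, hxW, hx⟩
    rw [if_neg fun h => hx (h x ((hWB x).1 hxW)), mul_zero, pow_eq_zero_iff two_ne_zero] at hS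
    rw [hS, mul_zero, add_zero] at hNS
    exact_mod_cast hNS
  · intro hQW
    rw [if_pos fun h hh => hQW h ((hWB h).2 hh)] at hS
    have hcardW : Fintype.card B.ker = 2 ^ w := by
      rw [hw, ← Fintype.card_congr (Equiv.subtypeEquivRight hWB),
        Module.card_eq_pow_finrank (K := ZMod 2) (V := W), ZMod.card]
    have he : ((signChar (Algebra.trace (ZMod 2) _ d) * ∑ x, signChar (Q x) : ℤ) : ℝ) ^ 2 =
        2 ^ w * 2 ^ m := by
      rw [← Int.cast_pow, mul_pow, signChar_sq, one_mul, hS, hcardW, hq]; push_cast; ring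
    rw [show (N : ℝ) = _ from congrArg (Int.cast (R := ℝ)) hNS]
    push_cast at he ⊢
    exact add_eq_add_sqrt_or_sub_sqrt _ he

/-- van der Geer–van der Vlugt: number of points of `y² + y = ax⁵ + bx³ + cx + d`
(including the point at infinity) over `k = F_{2^m}`. -/
theorem stmt9 (m : ℕ) (hm : 0 < m) [Fintype (GaloisField 2 m)]
    (a b c d : GaloisField 2 m) (ha : a ≠ 0)
    (R : GaloisField 2 m → GaloisField 2 m)
    (hR : ∀ x, R x = a * x ^ 4 + b * x ^ 2 + c ^ 2 * x)
    (Q : GaloisField 2 m → ZMod 2)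
    (hQ : ∀ x, Q x = Algebra.trace (ZMod 2) (GaloisField 2 m) (x * R x))
    (W : Submodule (ZMod 2) (GaloisField 2 m))
    (hW : ∀ x, x ∈ W ↔ ∀ y,
      Algebra.trace (ZMod 2) (GaloisField 2 m) (x * R y + y * R x) = 0)
    (w : ℕ) (hw : w = Module.finrank (ZMod 2) W)
    (N : ℕ)
    (hN : N = 1 + (Finset.univ.filter
      (fun p : GaloisField 2 m × GaloisField 2 m =>
        p.2 ^ 2 + p.2 = a * p.1 ^ 5 + b * p.1 ^ 3 + c * p.1 + d)).card) :
    ((∃ x ∈ W, Q x ≠ 0) → (N : ℝ) = 1 + 2 ^ m) ∧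
    ((∀ x ∈ W, Q x = 0) →
      (N : ℝ) = 1 + 2 ^ m + Real.sqrt (2 ^ w * 2 ^ m) ∨
      (N : ℝ) = 1 + 2 ^ m - Real.sqrt (2 ^ w * 2 ^ m)) :=
  stmt9_general m hm a b c d R hR Q hQ W hW w hw N hN
end
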